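/- Let A ∈ ℝ^{n×d} have full column rank with SVD A = UΣVᵀ, let Π satisfy ‖I − UᵀΠΠᵀU‖₂ ≤ ε with 0 ≤ ε < 1, and set Ã = (AᵀΠΠᵀA)^{1/2}. Define the true leverage scores τ_i = ‖e_iᵀ A A⁺‖₂² and the estimates τ̃_i = ‖e_iᵀ A Ã^{-1}‖₂². Then for every i ∈ [n], |τ̃_i − τ_i| ≤ (ε/(1−ε))·τ_i. -/

import Mathlib

/-! Put `M = UᵀΠΠᵀU`; the hypothesis on `Π` says `(1 - ε) I ≼ M ≼ (1 + ε) I` as quadratic forms.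
Since `Ã² = AᵀΠΠᵀA = (ΣVᵀ)ᵀ M (ΣVᵀ)` with `ΣVᵀ` invertible, `(AÃ⁻¹)(AÃ⁻¹)ᵀ = A Ã⁻² Aᵀ = U M⁻¹ Uᵀ`,
so for the `i`-th row `u` of `U` we get `τ̃ᵢ = uᵀM⁻¹u` and `τᵢ = uᵀu`. Inverting the two-sided
bound on `M` gives `uᵀu / (1 + ε) ≤ uᵀM⁻¹u ≤ uᵀu / (1 - ε)`. -/

open Matrix

noncomputable def sqnorm2 {n : ℕ} (v : Fin n → ℝ) : ℝ := ∑ i, (v i) ^ 2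

noncomputable def specNorm {m n : ℕ} (M : Matrix (Fin m) (Fin n) ℝ) : ℝ :=
  sSup {c | ∃ x : Fin n → ℝ, sqnorm2 x = 1 ∧ c = Real.sqrt (sqnorm2 (M.mulVec x))}

open scoped ComplexOrder in
noncomputable def Matrix.PosSemidef.sqrt {n : Type*} [Fintype n] [DecidableEq n]
    {𝕜 : Type*} [RCLike 𝕜] {A : Matrix n n 𝕜} (hA : A.PosSemidef) : Matrix n n 𝕜 :=
  hA.1.eigenvectorUnitary.1 * diagonal ((↑) ∘ (√·) ∘ hA.1.eigenvalues) *
  (star hA.1.eigenvectorUnitary : Matrix n n 𝕜)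

namespace Matrix.PosSemidef

open scoped ComplexOrder

variable {n 𝕜 : Type*} [Fintype n] [DecidableEq n] [RCLike 𝕜] {A : Matrix n n 𝕜}

lemma sqrt_mul_self (hA : A.PosSemidef) : hA.sqrt * hA.sqrt = A := by
  conv_rhs => rw [hA.1.spectral_theorem, Unitary.conjStarAlgAut_apply]
  simp only [Matrix.PosSemidef.sqrt, Matrix.mul_assoc,
    ← Matrix.mul_assoc _ hA.1.eigenvectorUnitary.1, Unitary.coe_star_mul_self, Matrix.one_mul]
  rw [← Matrix.mul_assoc (diagonal _), diagonal_mul_diagonal]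
  congr 3
  funext i
  simp [← RCLike.ofReal_mul, Real.mul_self_sqrt (hA.eigenvalues_nonneg i)]

lemma isHermitian_sqrt (hA : A.PosSemidef) : hA.sqrt.IsHermitian := by
  simpa [Matrix.PosSemidef.sqrt, Matrix.mul_assoc, Matrix.star_eq_conjTranspose] using
    isHermitian_mul_mul_conjTranspose (hA.1.eigenvectorUnitary : Matrix n n 𝕜)
      (isHermitian_diagonal_of_self_adjoint _ (by ext; simp))

lemma transpose_sqrt {A : Matrix n n ℝ} (hA : A.PosSemidef) : hA.sqrtᵀ = hA.sqrt := by
  simpa [conjTranspose_eq_transpose_of_trivial] using hA.isHermitian_sqrt.eq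

end Matrix.PosSemidef

section Algebra

variable {m k α : Type*} [Fintype k] [CommRing α]

lemma sum_sq_apply_eq_mul_transpose_apply (N : Matrix m k α) (i : m) :
    ∑ j, N i j ^ 2 = (N * Nᵀ) i i := by
  simp [mul_apply, sq]

lemma mul_mul_transpose_apply_self (U : Matrix m k α) (K : Matrix k k α) (i : m) :
    (U * K * Uᵀ) i i = U i ⬝ᵥ K *ᵥ U i := by
  rw [Matrix.mul_assoc]
  simp [mul_apply, dotProduct, mulVec, Finset.mul_sum, mul_comm]

variable [DecidableEq k]

lemma mul_inv_mul_transpose_mul_inv_of_transpose_eq (X : Matrix m k α) {R : Matrix k k α}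
    (hR : Rᵀ = R) : X * R⁻¹ * (X * R⁻¹)ᵀ = X * (R * R)⁻¹ * Xᵀ := by
  rw [transpose_mul, transpose_nonsing_inv, hR, Matrix.mul_inv_rev]
  simp only [Matrix.mul_assoc]

lemma mul_inv_transpose_mul_mul_mul_transpose (U : Matrix m k α) (N : Matrix k k α)
    {B : Matrix k k α} (hB : IsUnit B.det) :
    U * B * (Bᵀ * N * B)⁻¹ * (U * B)ᵀ = U * N⁻¹ * Uᵀ := by
  have hBt : IsUnit Bᵀ.det := (det_transpose B).symm ▸ hB
  rw [Matrix.mul_inv_rev, Matrix.mul_inv_rev, transpose_mul]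
  simp only [Matrix.mul_assoc]
  rw [← Matrix.mul_assoc B, mul_nonsing_inv B hB, Matrix.one_mul,
    ← Matrix.mul_assoc Bᵀ⁻¹, nonsing_inv_mul Bᵀ hBt, Matrix.one_mul]

end Algebra

section QuadraticForm

variable {ι : Type*} [Fintype ι]

lemma dotProduct_self_nonneg (x : ι → ℝ) : 0 ≤ x ⬝ᵥ x :=
  Finset.sum_nonneg fun i _ => mul_self_nonneg (x i)

lemma dotProduct_sq_le (x y : ι → ℝ) : (x ⬝ᵥ y) ^ 2 ≤ (x ⬝ᵥ x) * (y ⬝ᵥ y) := by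
  simpa [dotProduct, sq] using Finset.sum_mul_sq_le_sq_mul_sq Finset.univ x y

variable [DecidableEq ι] {M : Matrix ι ι ℝ}

lemma isUnit_det_of_mul_dotProduct_le {c : ℝ} (hc : 0 < c)
    (hlow : ∀ x, c * (x ⬝ᵥ x) ≤ x ⬝ᵥ M *ᵥ x) : IsUnit M.det := by
  refine isUnit_iff_ne_zero.mpr fun h => ?_
  obtain ⟨v, hv, hMv⟩ := exists_mulVec_eq_zero_iff.mpr h
  have hvv : 0 < v ⬝ᵥ v :=
    (dotProduct_self_nonneg v).lt_of_ne' (dotProduct_self_eq_zero.not.mpr hv)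
  have hv0 := hlow v
  rw [hMv, dotProduct_zero] at hv0
  nlinarith

lemma mul_dotProduct_inv_mulVec_le (hM : IsUnit M.det) {c : ℝ} (hc : 0 ≤ c)
    (hlow : ∀ x, c * (x ⬝ᵥ x) ≤ x ⬝ᵥ M *ᵥ x) (u : ι → ℝ) :
    c * (u ⬝ᵥ M⁻¹ *ᵥ u) ≤ u ⬝ᵥ u := by
  set y := M⁻¹ *ᵥ u
  have hMy : M *ᵥ y = u := by rw [mulVec_mulVec, mul_nonsing_inv M hM, one_mulVec]
  have hq : u ⬝ᵥ y = y ⬝ᵥ M *ᵥ y := by rw [hMy, dotProduct_comm]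
  -- expand `0 ≤ |u - c y|²` and use `c |y|² ≤ yᵀ M y = uᵀ y`
  have hexp := dotProduct_self_nonneg (u - c • y)
  simp only [sub_dotProduct, dotProduct_sub, smul_dotProduct, dotProduct_smul, smul_eq_mul,
    dotProduct_comm y u] at hexp
  nlinarith [mul_le_mul_of_nonneg_left (hlow y) hc]

lemma dotProduct_le_mul_dotProduct_inv_mulVec (hM : IsUnit M.det) (hsymm : M.IsSymm)
    (hpsd : ∀ x, 0 ≤ x ⬝ᵥ M *ᵥ x) {C : ℝ} (hC : 0 < C)
    (hhigh : ∀ x, x ⬝ᵥ M *ᵥ x ≤ C * (x ⬝ᵥ x)) (u : ι → ℝ) :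
    u ⬝ᵥ u ≤ C * (u ⬝ᵥ M⁻¹ *ᵥ u) := by
  set y := M⁻¹ *ᵥ u
  have hMy : M *ᵥ y = u := by rw [mulVec_mulVec, mul_nonsing_inv M hM, one_mulVec]
  have hyMu : y ⬝ᵥ M *ᵥ u = u ⬝ᵥ u := by
    rw [dotProduct_mulVec, ← mulVec_transpose, hsymm.eq, hMy]
  -- expand `0 ≤ (u - C y)ᵀ M (u - C y)` and use `uᵀ M u ≤ C |u|²`
  have hexp := hpsd (u - C • y)
  simp only [mulVec_sub, mulVec_smul, hMy, sub_dotProduct, dotProduct_sub, smul_dotProduct,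
    dotProduct_smul, smul_eq_mul, hyMu, dotProduct_comm y u] at hexp
  nlinarith [hhigh u]

lemma abs_dotProduct_inv_mulVec_sub_le (hsymm : M.IsSymm) {ε : ℝ} (hε0 : 0 ≤ ε) (hε1 : ε < 1)
    (hM : ∀ x, |x ⬝ᵥ (1 - M) *ᵥ x| ≤ ε * (x ⬝ᵥ x)) (u : ι → ℝ) :
    |u ⬝ᵥ M⁻¹ *ᵥ u - u ⬝ᵥ u| ≤ ε / (1 - ε) * (u ⬝ᵥ u) := by
  have hform : ∀ x, x ⬝ᵥ (1 - M) *ᵥ x = x ⬝ᵥ x - x ⬝ᵥ M *ᵥ x := fun x => by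
    rw [sub_mulVec, one_mulVec, dotProduct_sub]
  have hlow : ∀ x, (1 - ε) * (x ⬝ᵥ x) ≤ x ⬝ᵥ M *ᵥ x := fun x => by
    linarith [(abs_le.mp (hform x ▸ hM x)).2]
  have hhigh : ∀ x, x ⬝ᵥ M *ᵥ x ≤ (1 + ε) * (x ⬝ᵥ x) := fun x => by
    linarith [(abs_le.mp (hform x ▸ hM x)).1]
  have hε : 0 < 1 - ε := by linarith
  have hdet := isUnit_det_of_mul_dotProduct_le hε hlow
  have hupper := mul_dotProduct_inv_mulVec_le hdet hε.le hlow u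
  have hlower := dotProduct_le_mul_dotProduct_inv_mulVec hdet hsymm
    (fun x => (mul_nonneg hε.le (dotProduct_self_nonneg x)).trans (hlow x))
    (by linarith) hhigh u
  have hq : u ⬝ᵥ M⁻¹ *ᵥ u ≤ (u ⬝ᵥ u) / (1 - ε) := (le_div_iff₀ hε).mpr (by linarith)
  have hrhs : ε / (1 - ε) * (u ⬝ᵥ u) = (u ⬝ᵥ u) / (1 - ε) - u ⬝ᵥ u := by field_simp; ring
  have hεq : ε * (u ⬝ᵥ M⁻¹ *ᵥ u) ≤ (u ⬝ᵥ u) / (1 - ε) - u ⬝ᵥ u := by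
    rw [← hrhs, div_mul_eq_mul_div, mul_div_assoc]
    exact mul_le_mul_of_nonneg_left hq hε0
  rw [abs_le, hrhs]
  constructor <;> linarith

end QuadraticForm

section SpectralNorm

variable {m n : ℕ}

lemma sqnorm2_eq_dotProduct (v : Fin n → ℝ) : sqnorm2 v = v ⬝ᵥ v := by
  simp [sqnorm2, dotProduct, sq]

lemma sqnorm2_smul (c : ℝ) (v : Fin n → ℝ) : sqnorm2 (c • v) = c ^ 2 * sqnorm2 v := by
  simp [sqnorm2, Finset.mul_sum, mul_pow]

lemma specNorm_nonneg (B : Matrix (Fin m) (Fin n) ℝ) : 0 ≤ specNorm B :=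
  Real.sSup_nonneg fun _ ⟨_, _, hc⟩ => hc ▸ Real.sqrt_nonneg _

lemma sqnorm2_mulVec_le_frobenius (B : Matrix (Fin m) (Fin n) ℝ) (x : Fin n → ℝ) :
    sqnorm2 (B *ᵥ x) ≤ (∑ i, ∑ j, B i j ^ 2) * sqnorm2 x := by
  rw [sqnorm2, Finset.sum_mul]
  exact Finset.sum_le_sum fun i _ => by
    simpa [mulVec, dotProduct, sqnorm2] using Finset.sum_mul_sq_le_sq_mul_sq Finset.univ (B i) x

lemma sqrt_sqnorm2_mulVec_le_specNorm (B : Matrix (Fin m) (Fin n) ℝ) {x : Fin n → ℝ}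
    (hx : sqnorm2 x = 1) : √(sqnorm2 (B *ᵥ x)) ≤ specNorm B := by
  refine le_csSup ⟨√(∑ i, ∑ j, B i j ^ 2), ?_⟩ ⟨x, hx, rfl⟩
  rintro _ ⟨y, hy, rfl⟩
  gcongr
  simpa [hy] using sqnorm2_mulVec_le_frobenius B y

lemma sqnorm2_mulVec_le (B : Matrix (Fin m) (Fin n) ℝ) (x : Fin n → ℝ) :
    sqnorm2 (B *ᵥ x) ≤ specNorm B ^ 2 * sqnorm2 x := by
  rcases eq_or_ne x 0 with rfl | hx
  · simp [sqnorm2]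
  set c := √(sqnorm2 x)
  have hx2 : 0 < sqnorm2 x := by
    rw [sqnorm2_eq_dotProduct]
    exact (dotProduct_self_nonneg x).lt_of_ne' (dotProduct_self_eq_zero.not.mpr hx)
  have hc2 : c ^ 2 = sqnorm2 x := Real.sq_sqrt hx2.le
  have hc : c ≠ 0 := (Real.sqrt_pos.mpr hx2).ne'
  have hunit : sqnorm2 (c⁻¹ • x) = 1 := by
    rw [sqnorm2_smul, inv_pow, hc2, inv_mul_cancel₀ hx2.ne']
  have hBu := (Real.sqrt_le_left (specNorm_nonneg B)).mp
    (sqrt_sqnorm2_mulVec_le_specNorm B hunit)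
  calc sqnorm2 (B *ᵥ x) = c ^ 2 * sqnorm2 (B *ᵥ (c⁻¹ • x)) := by
        rw [mulVec_smul, sqnorm2_smul, ← mul_assoc, ← mul_pow, mul_inv_cancel₀ hc, one_pow,
          one_mul]
    _ ≤ specNorm B ^ 2 * sqnorm2 x := by rw [hc2, mul_comm]; gcongr

lemma abs_dotProduct_mulVec_le (B : Matrix (Fin n) (Fin n) ℝ) (x : Fin n → ℝ) :
    |x ⬝ᵥ B *ᵥ x| ≤ specNorm B * (x ⬝ᵥ x) := by
  refine abs_le_of_sq_le_sq ?_ (mul_nonneg (specNorm_nonneg B) (dotProduct_self_nonneg x))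
  calc (x ⬝ᵥ B *ᵥ x) ^ 2 ≤ (x ⬝ᵥ x) * sqnorm2 (B *ᵥ x) := by
        rw [sqnorm2_eq_dotProduct]; exact dotProduct_sq_le _ _
    _ ≤ (x ⬝ᵥ x) * (specNorm B ^ 2 * (x ⬝ᵥ x)) := by
        rw [← sqnorm2_eq_dotProduct x]; gcongr
        · rw [sqnorm2_eq_dotProduct]; exact dotProduct_self_nonneg x
        · exact sqnorm2_mulVec_le B x
    _ = (specNorm B * (x ⬝ᵥ x)) ^ 2 := by ring

end SpectralNorm

theorem stmt5_general {n d r : ℕ} (ε : ℝ) (hε0 : 0 ≤ ε) (hε1 : ε < 1)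
    (A U : Matrix (Fin n) (Fin d) ℝ) (S V : Matrix (Fin d) (Fin d) ℝ)
    (σ : Fin d → ℝ) (hσ : ∀ i, 0 < σ i) (hS : S = Matrix.diagonal σ)
    (hV : Vᵀ * V = 1) (hA : A = U * S * Vᵀ)
    (Pi : Matrix (Fin n) (Fin r) ℝ)
    (hPi : specNorm ((1 : Matrix (Fin d) (Fin d) ℝ) - Uᵀ * Pi * Piᵀ * U) ≤ ε)
    (hPSD : (Aᵀ * Pi * Piᵀ * A).PosSemidef)
    (τ τt : Fin n → ℝ)
    (hτ : ∀ i, τ i = ∑ j, (U i j) ^ 2)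
    (hτt : ∀ i, τt i = ∑ j, ((A * hPSD.sqrt⁻¹) i j) ^ 2) :
    ∀ i, |τt i - τ i| ≤ (ε / (1 - ε)) * τ i := by
  intro i
  set M := Uᵀ * Pi * Piᵀ * U
  have hB : IsUnit (S * Vᵀ).det := by
    rw [det_mul, hS, det_diagonal, det_transpose]
    exact (isUnit_iff_ne_zero.mpr (Finset.prod_pos fun j _ => hσ j).ne').mul
      (isUnit_det_of_left_inverse hV)
  have hG : Aᵀ * Pi * Piᵀ * A = (S * Vᵀ)ᵀ * M * (S * Vᵀ) := by
    simp only [M, hA, transpose_mul, Matrix.mul_assoc]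
  have hτt' : τt i = U i ⬝ᵥ M⁻¹ *ᵥ U i := by
    rw [hτt, sum_sq_apply_eq_mul_transpose_apply,
      mul_inv_mul_transpose_mul_inv_of_transpose_eq _ hPSD.transpose_sqrt, hPSD.sqrt_mul_self,
      hG, hA, Matrix.mul_assoc U, mul_inv_transpose_mul_mul_mul_transpose _ _ hB,
      mul_mul_transpose_apply_self]
  have hτ' : τ i = U i ⬝ᵥ U i := by
    rw [hτ, sum_sq_apply_eq_mul_transpose_apply, mul_apply]; rfl
  rw [hτt', hτ']
  refine abs_dotProduct_inv_mulVec_sub_le ?_ hε0 hε1 (fun x => ?_) (U i)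
  · simp only [M, IsSymm, transpose_mul, transpose_transpose, Matrix.mul_assoc]
  · exact (abs_dotProduct_mulVec_le _ x).trans
      (mul_le_mul_of_nonneg_right hPi (dotProduct_self_nonneg x))

/-- relative-error leverage scores.  Here the true leverage score is
`τ i = ‖e_iᵀ A A⁺‖₂² = ‖e_iᵀ U‖₂²` (the squared norm of the i-th row of `U`), and the
estimate is `τ̃ i = ‖e_iᵀ A Ã⁻¹‖₂²` where `Ã = (AᵀΠΠᵀA)^{1/2}`. -/
theorem stmt5 {n d r : ℕ} (ε : ℝ) (hε0 : 0 ≤ ε) (hε1 : ε < 1)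
    (A U : Matrix (Fin n) (Fin d) ℝ) (S V : Matrix (Fin d) (Fin d) ℝ)
    (σ : Fin d → ℝ) (hσ : ∀ i, 0 < σ i) (hS : S = Matrix.diagonal σ)
    (hU : Uᵀ * U = 1) (hV : Vᵀ * V = 1) (hA : A = U * S * Vᵀ)
    (Pi : Matrix (Fin n) (Fin r) ℝ)
    (hPi : specNorm ((1 : Matrix (Fin d) (Fin d) ℝ) - Uᵀ * Pi * Piᵀ * U) ≤ ε)
    (hPSD : (Aᵀ * Pi * Piᵀ * A).PosSemidef)
    (τ τt : Fin n → ℝ)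
    (hτ : ∀ i, τ i = ∑ j, (U i j) ^ 2)
    (hτt : ∀ i, τt i = ∑ j, ((A * hPSD.sqrt⁻¹) i j) ^ 2) :
    ∀ i, |τt i - τ i| ≤ (ε / (1 - ε)) * τ i :=
  stmt5_general ε hε0 hε1 A U S V σ hσ hS hV hA Pi hPi hPSD τ τt hτ hτt
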